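/- arXiv:2502.05068 — 5 statements merged into one kernel-verified Lean document; each statement's English description precedes it below -/
import Mathlib

section
/- Perturbative growth rate of a reversible Markov generator: Let V be a finite nonempty index set, A⁰ a real matrix indexed by V with nonnegative off-diagonal entries and zero column sums (∑_{σ'} A⁰_{σ',σ} = 0 for all σ), irreducible, and satisfying detailed balance with respect to a probability vector π⁰ with all entries strictly positive, i.e. π⁰_σ · A⁰_{σ',σ} = π⁰_{σ'} · A⁰_{σ,σ'} for all σ, σ'. Let B be a real matrix indexed by V with nonnegative off-diagonal entries. Suppose ε₁ > 0 and λ : ℝ → ℝ is a function such that for every ε ∈ (0, ε₁), λ(ε) is an eigenvalue of A⁰ + ε·B and every complex eigenvalue of A⁰ + ε·B has real part at most λ(ε). Then λ(ε)/ε tends to ∑_{σ∈V} κ_σ(B) · π⁰_σ as ε → 0⁺, where κ_σ(B) := ∑_{σ'∈V} B_{σ',σ}. -/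
/-- A complex number `μ` is an eigenvalue of the real matrix `M`
(via its complexification). -/
def Matrix.IsComplexEigenvalue {V : Type*} [Fintype V] (M : Matrix V V ℝ) (μ : ℂ) : Prop :=
  ∃ v : V → ℂ, v ≠ 0 ∧ (M.map (Complex.ofReal)).mulVec v = μ • v

/-- `A` is irreducible: any two distinct indices are connected by a chain of
strictly positive transition entries. -/
def Matrix.IsIrreducibleMetzlerChain {V : Type*} (A : Matrix V V ℝ) : Prop :=
  ∀ σ σ' : V, σ ≠ σ' → Relation.TransGen (fun x y => x ≠ y ∧ 0 < A y x) σ σ'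

/-!
Detailed balance and zero column sums give `A⁰ π⁰ = 0`; by the maximum principle for the
irreducible Metzler matrix `A⁰` its kernel is the line through `π⁰`, so its range is the
hyperplane of vectors with zero sum. Hence the corrector equation `A⁰ u = c π⁰ - B π⁰`, with
`c = ∑ κ_σ(B) π⁰_σ`, is solvable, and `w_ε = π⁰ + ε u` is a positive vector with
`(A⁰ + ε B) w_ε = ε c w_ε + O(ε²) w_ε` componentwise. For a Metzler matrix `M` and a positive
`w`, `M w ≤ γ w` bounds every real eigenvalue by `γ` (compare an eigenvector with `w` where
their ratio is maximal), while `α w ≤ M w` forces an eigenvalue of real part at least `α`: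
by Gelfand's formula the nonnegative matrix `M + t` has spectral radius at least `α + t`, and
for large `t` an eigenvalue `z + t` with `re z < α` is shorter than that. So
`λ(ε) = ε c + O(ε²)`.
-/

open Matrix Finset Filter Module
open scoped Topology

theorem LinearMap.range_eq_ker_of_comp_eq_zero {K E : Type*} [Field K] [AddCommGroup E]
    [Module K E] [FiniteDimensional K E] {f : E →ₗ[K] E} {φ : Module.Dual K E} (hφ : φ ≠ 0)
    (hφf : φ ∘ₗ f = 0) (hf : finrank K (LinearMap.ker f) = 1) :
    LinearMap.range f = LinearMap.ker φ := by
  refine Submodule.eq_of_le_of_finrank_eq (LinearMap.range_le_ker_iff.2 hφf) ?_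
  have := f.finrank_range_add_finrank_ker
  have := Module.Dual.finrank_ker_add_one_of_ne_zero hφ
  omega

theorem tendsto_div_self_of_abs_sub_le {f : ℝ → ℝ} {c K : ℝ}
    (hf : ∀ᶠ ε in 𝓝[>] 0, |f ε - ε * c| ≤ K * ε ^ 2) :
    Tendsto (fun ε => f ε / ε) (𝓝[>] 0) (𝓝 c) := by
  rw [← tendsto_sub_nhds_zero_iff]
  refine squeeze_zero_norm' ?_ (tendsto_nhdsWithin_of_tendsto_nhds
    (by simpa using (continuous_const_mul K).tendsto 0))
  filter_upwards [hf, self_mem_nhdsWithin] with ε hε (hε0 : 0 < ε)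
  rw [Real.norm_eq_abs, ← mul_div_cancel_left₀ c hε0.ne', ← sub_div, abs_div,
    abs_of_pos hε0, div_le_iff₀ hε0]
  linarith [show K * ε * ε = K * ε ^ 2 by ring]

theorem Complex.eventually_norm_add_ofReal_lt {z : ℂ} {a : ℝ} (hz : z.re < a) :
    ∀ᶠ t : ℝ in atTop, ‖z + t‖ < a + t := by
  filter_upwards [eventually_gt_atTop (-z.re),
    eventually_gt_atTop ((z.im ^ 2 / (a - z.re) - a - z.re) / 2)] with t ht₁ ht₂
  have hd : 0 < a - z.re := sub_pos.2 hz
  have him : z.im ^ 2 < (a - z.re) * (a + z.re + 2 * t) := by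
    rw [← div_lt_iff₀' hd]; linarith
  rw [← sq_lt_sq₀ (norm_nonneg _) (by linarith), Complex.sq_norm, Complex.normSq_apply]
  simp only [add_re, ofReal_re, add_im, ofReal_im, add_zero]
  nlinarith

section Metzler

variable {V : Type*}

def Matrix.IsMetzler (M : Matrix V V ℝ) : Prop :=
  ∀ i j, i ≠ j → 0 ≤ M i j

theorem Matrix.IsMetzler.mul_sub_nonneg {M : Matrix V V ℝ} {u v : V → ℝ} {i : V}
    (hM : M.IsMetzler) (huv : v ≤ u) (hi : v i = u i) (j : V) : 0 ≤ M i j * (u j - v j) := by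
  rcases eq_or_ne i j with rfl | hij
  · simp [hi]
  · exact mul_nonneg (hM i j hij) (sub_nonneg.2 (huv j))

variable [Fintype V]

theorem exists_le_smul_of_pos [Nonempty V] (v : V → ℝ) {w : V → ℝ} (hw : ∀ i, 0 < w i) :
    ∃ s i, v ≤ s • w ∧ v i = s * w i := by
  obtain ⟨i, -, hi⟩ := exists_max_image univ (fun j => v j / w j) univ_nonempty
  refine ⟨v i / w i, i, fun j => ?_, (div_mul_cancel₀ _ (hw i).ne').symm⟩
  exact (div_le_iff₀ (hw j)).1 (hi j (mem_univ j))

theorem exists_abs_lt_mul_of_pos (R : V → ℝ) {p : V → ℝ} (hp : ∀ i, 0 < p i) :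
    ∃ K, ∀ i, |R i| < K * p i := by
  refine ⟨∑ j, |R j| / p j + 1, fun i => ?_⟩
  have := single_le_sum (fun j _ => div_nonneg (abs_nonneg (R j)) (hp j).le) (mem_univ i)
  rw [← div_lt_iff₀ (hp i)]
  linarith

theorem Matrix.mulVec_apply_sub_mulVec_apply (M : Matrix V V ℝ) (u v : V → ℝ) (i : V) :
    (M *ᵥ u) i - (M *ᵥ v) i = ∑ j, M i j * (u j - v j) := by
  simp only [mulVec, dotProduct, ← sum_sub_distrib, mul_sub]

theorem Matrix.mulVec_mono {N : Matrix V V ℝ} (hN : ∀ i j, 0 ≤ N i j) {u v : V → ℝ}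
    (huv : v ≤ u) : N *ᵥ v ≤ N *ᵥ u := fun i =>
  sum_le_sum fun j _ => mul_le_mul_of_nonneg_left (huv j) (hN i j)

theorem Matrix.exists_mulVec_eq_of_sum_eq_zero (A : Matrix V V ℝ) (hcol : ∀ j, ∑ i, A i j = 0)
    {p : V → ℝ} (hp : p ≠ 0) (hAp : A *ᵥ p = 0) (hker : ∀ v, A *ᵥ v = 0 → ∃ s : ℝ, v = s • p)
    {y : V → ℝ} (hy : ∑ i, y i = 0) : ∃ u, A *ᵥ u = y := by
  classical
  let φ : Module.Dual ℝ (V → ℝ) := ∑ i, LinearMap.proj i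
  have hφ : ∀ v, φ v = ∑ i, v i := fun v => by simp [φ]
  have hφ0 : φ ≠ 0 := by
    obtain ⟨i, -⟩ := Function.ne_iff.1 hp
    intro h
    simpa [hφ] using congr($h (Pi.single i 1))
  have hφA : φ ∘ₗ A.mulVecLin = 0 := by
    ext v
    simp only [LinearMap.comp_apply, hφ, mulVecLin_apply, LinearMap.zero_apply]
    simp [mulVec, dotProduct, sum_comm (γ := V), ← sum_mul, hcol]
  have hkerA : LinearMap.ker A.mulVecLin = Submodule.span ℝ {p} := by
    refine le_antisymm (fun v hv => ?_) ?_
    · obtain ⟨s, rfl⟩ := hker v hv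
      exact Submodule.smul_mem _ s (Submodule.mem_span_singleton_self p)
    · simpa [Submodule.span_singleton_le_iff_mem] using hAp
  have hrange := LinearMap.range_eq_ker_of_comp_eq_zero hφ0 hφA
    (by rw [hkerA, finrank_span_singleton hp])
  have hy' : y ∈ LinearMap.range A.mulVecLin := by simp [hrange, hφ, hy]
  simpa using hy'

namespace Matrix.IsMetzler

variable {M : Matrix V V ℝ} {u v : V → ℝ} {i : V}

theorem mulVec_apply_le (hM : M.IsMetzler) (huv : v ≤ u) (hi : v i = u i) :
    (M *ᵥ v) i ≤ (M *ᵥ u) i := by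
  rw [← sub_nonneg, mulVec_apply_sub_mulVec_apply]
  exact sum_nonneg fun j _ => hM.mul_sub_nonneg huv hi j

theorem apply_eq_of_mulVec_apply_eq (hM : M.IsMetzler) (huv : v ≤ u) (hi : v i = u i)
    (heq : (M *ᵥ v) i = (M *ᵥ u) i) {j : V} (hj : 0 < M i j) : v j = u j := by
  have hsum := sub_eq_zero.2 heq.symm
  rw [mulVec_apply_sub_mulVec_apply,
    sum_eq_zero_iff_of_nonneg fun j _ => hM.mul_sub_nonneg huv hi j] at hsum
  have := (mul_eq_zero.1 (hsum j (mem_univ j))).resolve_left hj.ne'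
  linarith

theorem le_of_mulVec_le [Nonempty V] (hM : M.IsMetzler) {w : V → ℝ} (hw : ∀ i, 0 < w i)
    {γ : ℝ} (hMw : M *ᵥ w ≤ γ • w) {μ : ℝ} (hv : v ≠ 0) (hμ : M *ᵥ v = μ • v) : μ ≤ γ := by
  wlog hpos : ∃ j, 0 < v j generalizing v
  · refine this (neg_ne_zero.2 hv) (by rw [mulVec_neg, hμ, smul_neg]) ?_
    simp only [not_exists, not_lt] at hpos
    obtain ⟨j, hj⟩ := Function.ne_iff.1 hv
    exact ⟨j, by simpa using lt_of_le_of_ne (hpos j) hj⟩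
  obtain ⟨s, i, hvs, hi⟩ := exists_le_smul_of_pos v hw
  obtain ⟨j, hj⟩ := hpos
  have hs : 0 < s := pos_of_mul_pos_left (hj.trans_le (hvs j)) (hw j).le
  have hvi : 0 < v i := hi ▸ mul_pos hs (hw i)
  have : μ * v i ≤ γ * v i :=
    calc μ * v i = (M *ᵥ v) i := by simp [hμ]
      _ ≤ (M *ᵥ (s • w)) i := hM.mulVec_apply_le hvs (by simp [hi])
      _ = s * (M *ᵥ w) i := by simp [mulVec_smul]
      _ ≤ s * (γ * w i) := mul_le_mul_of_nonneg_left (hMw i) hs.le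
      _ = γ * v i := by rw [hi]; ring
  exact le_of_mul_le_mul_right this hvi

theorem eq_smul_of_mulVec_eq_zero [Nonempty V] (hM : M.IsMetzler)
    (hirr : M.IsIrreducibleMetzlerChain) {p : V → ℝ} (hp : ∀ i, 0 < p i) (hMp : M *ᵥ p = 0)
    (hMv : M *ᵥ v = 0) : ∃ s : ℝ, v = s • p := by
  obtain ⟨s, i, hvs, hi⟩ := exists_le_smul_of_pos v hp
  -- the set where `v` touches `s • p` is closed under following edges backwards
  have hclosed : ∀ k j, v k = (s • p) k → 0 < M k j → v j = (s • p) j := fun k j hk hkj =>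
    hM.apply_eq_of_mulVec_apply_eq hvs hk (by simp [mulVec_smul, hMv, hMp]) hkj
  refine ⟨s, funext fun j => ?_⟩
  rcases eq_or_ne j i with rfl | hji
  · simpa using hi
  · have hpath := hirr j i hji
    clear hji
    induction hpath using Relation.TransGen.head_induction_on with
    | single h => exact hclosed _ _ (by simpa using hi) h.2
    | head h _ ih => exact hclosed _ _ ih h.2

end Matrix.IsMetzler

section Spectrum

variable [DecidableEq V]

theorem Matrix.pow_smul_le_pow_mulVec {N : Matrix V V ℝ} (hN : ∀ i j, 0 ≤ N i j) {w : V → ℝ}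
    {β : ℝ} (hβ : 0 ≤ β) (hNw : β • w ≤ N *ᵥ w) (k : ℕ) : β ^ k • w ≤ (N ^ k) *ᵥ w := by
  induction k with
  | zero => simp
  | succ k ih =>
    calc β ^ (k + 1) • w = β • β ^ k • w := by rw [pow_succ', mul_smul]
      _ ≤ β • (N ^ k *ᵥ w) := smul_le_smul_of_nonneg_left ih hβ
      _ = N ^ k *ᵥ (β • w) := (mulVec_smul _ _ _).symm
      _ ≤ N ^ k *ᵥ (N *ᵥ w) := mulVec_mono (pow_apply_nonneg hN k) hNw
      _ = N ^ (k + 1) *ᵥ w := by rw [mulVec_mulVec, pow_succ]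

theorem Matrix.isComplexEigenvalue_of_mem_spectrum {M : Matrix V V ℝ} {μ : ℂ}
    (hμ : μ ∈ spectrum ℂ (M.map Complex.ofReal)) : M.IsComplexEigenvalue μ := by
  rw [← Matrix.spectrum_toLin', ← Module.End.hasEigenvalue_iff_mem_spectrum] at hμ
  obtain ⟨v, hv⟩ := hμ.exists_hasEigenvector
  exact ⟨v, hv.2, by simpa using hv.apply_eq_smul⟩

attribute [local instance] Matrix.linftyOpNormedRing Matrix.linftyOpNormedAlgebra

theorem Matrix.pow_le_norm_pow [Nonempty V] {N : Matrix V V ℝ} (hN : ∀ i j, 0 ≤ N i j)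
    {w : V → ℝ} (hw : ∀ i, 0 < w i) {β : ℝ} (hβ : 0 ≤ β) (hNw : β • w ≤ N *ᵥ w) (k : ℕ) :
    β ^ k ≤ ‖N.map Complex.ofReal ^ k‖ := by
  obtain ⟨i, -, hi⟩ := exists_max_image univ w univ_nonempty
  have hwi : ‖Complex.ofReal ∘ w‖ ≤ w i := (pi_norm_le_iff_of_nonneg (hw i).le).2 fun j => by
    simpa [abs_of_pos (hw j)] using hi j (mem_univ j)
  have hmap : N.map Complex.ofReal ^ k = (N ^ k).map Complex.ofReal :=
    (map_pow (Complex.ofRealHom.mapMatrix (m := V)) N k).symm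
  refine le_of_mul_le_mul_right ?_ (hw i)
  calc β ^ k * w i ≤ ((N ^ k) *ᵥ w) i := pow_smul_le_pow_mulVec hN hβ hNw k i
    _ ≤ ‖Complex.ofRealHom (((N ^ k) *ᵥ w) i)‖ := by simpa using le_abs_self (((N ^ k) *ᵥ w) i)
    _ = ‖((N ^ k).map Complex.ofReal *ᵥ (Complex.ofReal ∘ w)) i‖ := by
      rw [RingHom.map_mulVec]; rfl
    _ ≤ ‖(N ^ k).map Complex.ofReal *ᵥ (Complex.ofReal ∘ w)‖ := norm_le_pi_norm _ i
    _ ≤ ‖(N ^ k).map Complex.ofReal‖ * ‖Complex.ofReal ∘ w‖ := linfty_opNorm_mulVec _ _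
    _ ≤ ‖N.map Complex.ofReal ^ k‖ * w i := by
      rw [hmap]; exact mul_le_mul_of_nonneg_left hwi (norm_nonneg _)

theorem Matrix.ofReal_le_spectralRadius [Nonempty V] {N : Matrix V V ℝ} (hN : ∀ i j, 0 ≤ N i j)
    {w : V → ℝ} (hw : ∀ i, 0 < w i) {β : ℝ} (hβ : 0 ≤ β) (hNw : β • w ≤ N *ᵥ w) :
    ENNReal.ofReal β ≤ spectralRadius ℂ (N.map Complex.ofReal) := by
  have : CompleteSpace (Matrix V V ℂ) := FiniteDimensional.complete ℂ _
  refine ge_of_tendsto (spectrum.pow_norm_pow_one_div_tendsto_nhds_spectralRadius _) ?_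
  filter_upwards [eventually_ne_atTop 0] with k hk
  refine ENNReal.ofReal_le_ofReal ?_
  calc β = (β ^ k) ^ (1 / k : ℝ) := by rw [one_div, Real.pow_rpow_inv_natCast hβ hk]
    _ ≤ _ := Real.rpow_le_rpow (by positivity) (pow_le_norm_pow hN hw hβ hNw k) (by positivity)

theorem Matrix.IsMetzler.exists_isComplexEigenvalue_le_re [Nonempty V] {M : Matrix V V ℝ}
    (hM : M.IsMetzler) {w : V → ℝ} (hw : ∀ i, 0 < w i) {α : ℝ} (hMw : α • w ≤ M *ᵥ w) :
    ∃ μ, M.IsComplexEigenvalue μ ∧ α ≤ μ.re := by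
  have : CompleteSpace (Matrix V V ℂ) := FiniteDimensional.complete ℂ _
  by_contra! hlt
  have hspec : ∀ z ∈ spectrum ℂ (M.map Complex.ofReal), z.re < α := fun z hz =>
    hlt z (isComplexEigenvalue_of_mem_spectrum hz)
  obtain ⟨t, hdiag, htα, hshift⟩ := ((eventually_all.2 fun i => eventually_ge_atTop (-M i i)).and
    ((eventually_ge_atTop (-α)).and
    ((M.map Complex.ofReal).finite_spectrum.eventually_all.2
      fun z hz => Complex.eventually_norm_add_ofReal_lt (hspec z hz)))).exists
  set N := M + algebraMap ℝ (Matrix V V ℝ) t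
  have hN : ∀ i j, 0 ≤ N i j := fun i j => by
    rcases eq_or_ne i j with rfl | hij
    · simpa [N, algebraMap_matrix_apply, neg_le_iff_add_nonneg'] using hdiag i
    · simpa [N, algebraMap_matrix_apply, hij] using hM i j hij
  have hNw : (α + t) • w ≤ N *ᵥ w := fun i => by
    have := hMw i
    simp only [N, add_mulVec, algebraMap_eq_diagonal, mulVec_diagonal, Pi.add_apply,
      Pi.smul_apply, smul_eq_mul, Pi.algebraMap_apply, Algebra.algebraMap_self,
      RingHom.id_apply] at this ⊢
    linarith
  have hNmap : N.map Complex.ofReal = algebraMap ℂ _ (t : ℂ) + M.map Complex.ofReal := by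
    ext i j
    rcases eq_or_ne i j with rfl | hij <;> simp [N, algebraMap_matrix_apply, *, add_comm]
  have hρ : spectralRadius ℂ (N.map Complex.ofReal) < (α + t).toNNReal := by
    refine spectrum.spectralRadius_lt_of_forall_lt _ fun z hz => ?_
    rw [hNmap, ← spectrum.singleton_add_eq, Set.singleton_add] at hz
    obtain ⟨z, hz, rfl⟩ := hz
    rw [← NNReal.coe_lt_coe, coe_nnnorm, Real.coe_toNNReal _ (by linarith)]
    simpa [add_comm] using hshift z hz
  exact (ofReal_le_spectralRadius hN hw (by linarith) hNw).not_gt hρ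

end Spectrum

theorem Matrix.IsMetzler.abs_sub_le_of_abs_mulVec_sub_le [Nonempty V] {M : Matrix V V ℝ}
    (hM : M.IsMetzler) {w : V → ℝ} (hw : ∀ i, 0 < w i) {γ δ : ℝ}
    (hMw : ∀ i, |(M *ᵥ w) i - γ * w i| ≤ δ * w i) {lam : ℝ}
    (hlam : (∃ v : V → ℝ, v ≠ 0 ∧ M *ᵥ v = lam • v) ∧
      ∀ μ : ℂ, M.IsComplexEigenvalue μ → μ.re ≤ lam) :
    |lam - γ| ≤ δ := by
  classical
  obtain ⟨⟨v, hv, hvlam⟩, hmax⟩ := hlam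
  have hupper : lam ≤ γ + δ := hM.le_of_mulVec_le hw (fun i => by
    simp only [Pi.smul_apply, smul_eq_mul]; linarith [(abs_le.1 (hMw i)).2]) hv hvlam
  obtain ⟨μ, hμ, hμre⟩ := hM.exists_isComplexEigenvalue_le_re hw (α := γ - δ) fun i => by
    simp only [Pi.smul_apply, smul_eq_mul]; linarith [(abs_le.1 (hMw i)).1]
  rw [abs_sub_le_iff]
  constructor <;> linarith [hmax μ hμ]

theorem Matrix.IsMetzler.tendsto_div_of_mulVec_eq_smul_sub [Nonempty V] {A B : Matrix V V ℝ}
    (hA : A.IsMetzler) (hB : B.IsMetzler) {p u : V → ℝ} (hp : ∀ i, 0 < p i) (hAp : A *ᵥ p = 0)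
    {c : ℝ} (hAu : A *ᵥ u = c • p - B *ᵥ p) {lam : ℝ → ℝ}
    (hlam : ∀ᶠ ε in 𝓝[>] 0, (∃ v : V → ℝ, v ≠ 0 ∧ (A + ε • B) *ᵥ v = lam ε • v) ∧
      ∀ μ : ℂ, (A + ε • B).IsComplexEigenvalue μ → μ.re ≤ lam ε) :
    Tendsto (fun ε => lam ε / ε) (𝓝[>] 0) (𝓝 c) := by
  set R := B *ᵥ u - c • u
  have hexpand : ∀ ε : ℝ, (A + ε • B) *ᵥ (p + ε • u) = (ε * c) • (p + ε • u) + ε ^ 2 • R := by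
    intro ε
    simp only [R, add_mulVec, mulVec_add, smul_mulVec, mulVec_smul, hAp, hAu]
    module
  obtain ⟨K, hK⟩ := exists_abs_lt_mul_of_pos R hp
  have hw : ∀ᶠ ε in 𝓝[>] (0 : ℝ), ∀ i, 0 < (p + ε • u) i ∧ |R i| < K * (p + ε • u) i := by
    refine eventually_all.2 fun i => ?_
    have hcont : Tendsto (fun ε : ℝ => (p + ε • u) i) (𝓝[>] 0) (𝓝 (p i)) :=
      tendsto_nhdsWithin_of_tendsto_nhds
        ((by fun_prop : Continuous fun ε : ℝ => (p + ε • u) i).tendsto' 0 (p i) (by simp))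
    exact (hcont.eventually (lt_mem_nhds (hp i))).and
      ((hcont.const_mul K).eventually (lt_mem_nhds (hK i)))
  refine tendsto_div_self_of_abs_sub_le (K := K) ?_
  filter_upwards [hlam, hw, self_mem_nhdsWithin] with ε hlamε hwε (hε : 0 < ε)
  have hMetzler : (A + ε • B).IsMetzler := fun i j hij => by
    simpa using add_nonneg (hA i j hij) (mul_nonneg hε.le (hB i j hij))
  refine hMetzler.abs_sub_le_of_abs_mulVec_sub_le (fun i => (hwε i).1) (fun i => ?_) hlamε
  have hRi : ((A + ε • B) *ᵥ (p + ε • u)) i - ε * c * (p + ε • u) i = ε ^ 2 * R i := by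
    rw [hexpand]; simp only [Pi.add_apply, Pi.smul_apply, smul_eq_mul]; ring
  rw [hRi, abs_mul, abs_of_nonneg (sq_nonneg ε), mul_comm K, mul_assoc]
  exact mul_le_mul_of_nonneg_left (hwε i).2.le (sq_nonneg ε)

end Metzler

theorem perturbative_growth_rate_general {V : Type*} [Fintype V] [Nonempty V]
    (A0 B : Matrix V V ℝ)
    (hA0off : ∀ σ σ' : V, σ ≠ σ' → 0 ≤ A0 σ' σ)
    (hA0col : ∀ σ : V, ∑ σ', A0 σ' σ = 0)
    (hirr : A0.IsIrreducibleMetzlerChain)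
    (π0 : V → ℝ) (hπpos : ∀ σ, 0 < π0 σ) (hπsum : ∑ σ, π0 σ = 1)
    (hdb : ∀ σ σ' : V, π0 σ * A0 σ' σ = π0 σ' * A0 σ σ')
    (hBoff : ∀ σ σ' : V, σ ≠ σ' → 0 ≤ B σ' σ)
    (ε₁ : ℝ) (hε₁ : 0 < ε₁) (lam : ℝ → ℝ)
    (hlam : ∀ ε ∈ Set.Ioo 0 ε₁,
      (∃ v : V → ℝ, v ≠ 0 ∧ (A0 + ε • B).mulVec v = lam ε • v) ∧
      ∀ μ : ℂ, (A0 + ε • B).IsComplexEigenvalue μ → μ.re ≤ lam ε) :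
    Filter.Tendsto (fun ε => lam ε / ε) (nhdsWithin 0 (Set.Ioi 0))
      (nhds (∑ σ, (∑ σ', B σ' σ) * π0 σ)) := by
  have hA0 : A0.IsMetzler := fun i j hij => hA0off j i hij.symm
  have hA0π : A0 *ᵥ π0 = 0 := funext fun i => by
    calc ∑ j, A0 i j * π0 j = ∑ j, π0 i * A0 j i := sum_congr rfl fun j _ => by rw [mul_comm, hdb]
      _ = 0 := by rw [← mul_sum, hA0col, mul_zero]
  have hBπ : ∑ i, (B *ᵥ π0) i = ∑ σ, (∑ σ', B σ' σ) * π0 σ := by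
    simp only [mulVec, dotProduct, sum_mul]
    exact sum_comm
  obtain ⟨u, hu⟩ := A0.exists_mulVec_eq_of_sum_eq_zero hA0col
    (fun h => (hπpos (Classical.arbitrary V)).ne' (congrFun h _)) hA0π
    (fun v hv => hA0.eq_smul_of_mulVec_eq_zero hirr hπpos hA0π hv)
    (y := (∑ σ, (∑ σ', B σ' σ) * π0 σ) • π0 - B *ᵥ π0)
    (by simp [sum_sub_distrib, ← mul_sum, hπsum, hBπ])
  exact hA0.tendsto_div_of_mulVec_eq_smul_sub (fun i j hij => hBoff j i hij.symm) hπpos hA0π hu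
    (by filter_upwards [Ioo_mem_nhdsGT hε₁] with ε hε using hlam ε hε)

/-- **Perturbative growth rate of a reversible Markov generator.**
If `A⁰` is an irreducible Markov generator (columns sum to zero, nonnegative
off-diagonal entries) satisfying detailed balance w.r.t. a positive probability
vector `π⁰`, and `B` is Metzler, then the top eigenvalue `λ(ε)` of `A⁰ + ε B`
satisfies `λ(ε)/ε → ∑_σ κ_σ(B) π⁰_σ` as `ε → 0⁺`, where `κ_σ(B)` is the `σ`-th
column sum of `B`. -/
theorem perturbative_growth_rate {V : Type*} [Fintype V] [DecidableEq V] [Nonempty V]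
    (A0 B : Matrix V V ℝ)
    (hA0off : ∀ σ σ' : V, σ ≠ σ' → 0 ≤ A0 σ' σ)
    (hA0col : ∀ σ : V, ∑ σ', A0 σ' σ = 0)
    (hirr : A0.IsIrreducibleMetzlerChain)
    (π0 : V → ℝ) (hπpos : ∀ σ, 0 < π0 σ) (hπsum : ∑ σ, π0 σ = 1)
    (hdb : ∀ σ σ' : V, π0 σ * A0 σ' σ = π0 σ' * A0 σ σ')
    (hBoff : ∀ σ σ' : V, σ ≠ σ' → 0 ≤ B σ' σ)
    (ε₁ : ℝ) (hε₁ : 0 < ε₁) (lam : ℝ → ℝ)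
    (hlam : ∀ ε ∈ Set.Ioo 0 ε₁,
      (∃ v : V → ℝ, v ≠ 0 ∧ (A0 + ε • B).mulVec v = lam ε • v) ∧
      ∀ μ : ℂ, (A0 + ε • B).IsComplexEigenvalue μ → μ.re ≤ lam ε) :
    Filter.Tendsto (fun ε => lam ε / ε) (nhdsWithin 0 (Set.Ioi 0))
      (nhds (∑ σ, (∑ σ', B σ' σ) * π0 σ)) :=
  perturbative_growth_rate_general A0 B hA0off hA0col hirr π0 hπpos hπsum hdb hBoff ε₁ hε₁ lam hlam
end

section
/- Closed walks factor through excursions: Let V be a type, σ ∈ V, and w : V → V → [0,∞] (extended nonnegative reals). For a finite sequence γ = (σ₁, …, σ_ℓ) define its weight as ∏_{i=1}^{ℓ−1} w(σ_i, σ_{i+1}) (the empty product being 1). Let W ∈ [0,∞] be the tsum of the weights of all walks σ = σ₁, …, σ_ℓ = σ with ℓ ≥ 1 (including the trivial walk of length ℓ = 1, which has weight 1), and let F ∈ [0,∞] be the tsum of the weights of all excursions from σ to σ, i.e. walks σ = σ₁, …, σ_ℓ = σ with ℓ ≥ 2 and σ_i ≠ σ for 1 < i < ℓ. Then W = ∑'_{p∈ℕ}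 F^p. -/
open scoped ENNReal

/-- The weight of a finite walk: the product (in `[0,∞]`) of the edge weights
along its consecutive pairs; the empty product is `1`. -/
noncomputable def walkWeight {V : Type*} (w : V → V → ℝ≥0∞) : List V → ℝ≥0∞
  | [] => 1
  | [_] => 1
  | a :: b :: l => w a b * walkWeight w (b :: l)

/-- `l` is a closed walk at `σ`: a sequence of length `≥ 1` starting and ending
at `σ` (the trivial walk `[σ]` is allowed and has weight `1`). -/
def IsClosedWalk {V : Type*} (σ : V) (l : List V) : Prop :=
  l ≠ [] ∧ l.head? = some σ ∧ l.getLast? = some σ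

/-- `l` is an excursion from `σ` to `σ`: a walk of length `≥ 2` starting and
ending at `σ` whose intermediate vertices are all different from `σ`. -/
def IsExcursion {V : Type*} (σ : V) (l : List V) : Prop :=
  2 ≤ l.length ∧ l.head? = some σ ∧ l.getLast? = some σ ∧ ∀ x ∈ l.tail.dropLast, x ≠ σ

/-
Cutting a closed walk at `σ` at each of its visits to `σ` splits it, in exactly one way, into a
sequence of excursions from `σ`, and the weight of the walk is the product of their weights.
Hence the closed walks at `σ` are in weight-preserving bijection with the words over the
excursions, and summing over words of length `p` gives `F ^ p`.
-/

namespace ENNReal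

variable {α : Type*}

theorem tsum_prod_fin_eq_pow (f : α → ℝ≥0∞) (n : ℕ) :
    ∑' v : Fin n → α, ∏ i, f (v i) = (∑' a, f a) ^ n := by
  induction n with
  | zero => simp
  | succ n ih =>
    calc ∑' v : Fin (n + 1) → α, ∏ i, f (v i)
        = ∑' p : α × (Fin n → α), f p.1 * ∏ i, f (p.2 i) := by
          rw [← (Fin.consEquiv fun _ ↦ α).tsum_eq]
          simp [Fin.consEquiv, Fin.prod_univ_succ]
      _ = (∑' a, f a) ^ (n + 1) := by
          rw [ENNReal.tsum_prod', pow_succ', ← ih, ← ENNReal.tsum_mul_right]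
          simp_rw [ENNReal.tsum_mul_left]

theorem tsum_list_prod_map (f : α → ℝ≥0∞) :
    ∑' L : List α, (L.map f).prod = ∑' n : ℕ, (∑' a, f a) ^ n := by
  rw [← List.equivSigmaTuple.symm.tsum_eq, ENNReal.tsum_sigma']
  simp [List.equivSigmaTuple, List.map_ofFn, List.prod_ofFn, tsum_prod_fin_eq_pow]

end ENNReal

theorem List.append_cons_inj_of_notMem_left {α : Type*} {a : α} {t t' r r' : List α}
    (ht : a ∉ t) (ht' : a ∉ t') (h : t ++ a :: r = t' ++ a :: r') : t = t' ∧ r = r' := by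
  classical
  have hsplit := congrArg (List.splitOn a) h
  rw [List.splitOn_append_cons_self_of_not_mem ht,
    List.splitOn_append_cons_self_of_not_mem ht', List.cons.injEq] at hsplit
  exact ⟨hsplit.1, by simpa using congrArg ([a].intercalate) hsplit.2⟩

section

variable {V : Type*} {σ : V}

theorem walkWeight_append_cons (w : V → V → ℝ≥0∞) (l : List V) (a : V) (m : List V) :
    walkWeight w (l ++ a :: m) = walkWeight w (l ++ [a]) * walkWeight w (a :: m) := by
  induction l with
  | nil => simp [walkWeight]
  | cons b l ih =>
    cases l with
    | nil => simp [walkWeight]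
    | cons c l => simp only [List.cons_append, walkWeight] at ih ⊢; rw [ih, mul_assoc]

theorem isExcursion_iff {e : List V} :
    IsExcursion σ e ↔ ∃ t, σ ∉ t ∧ e = σ :: (t ++ [σ]) := by
  constructor
  · rintro ⟨hlen, hhead, hlast, hmid⟩
    obtain ⟨a, r, rfl⟩ := List.exists_cons_of_length_pos (by omega : 0 < e.length)
    have hr : r ≠ [] := by rintro rfl; simp at hlen
    obtain ⟨t, b, rfl⟩ := r.eq_nil_or_concat' |>.resolve_left hr
    obtain ⟨rfl, rfl⟩ : a = σ ∧ b = σ := by simp_all [List.getLast?_cons]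
    exact ⟨t, fun h ↦ hmid _ (by simpa using h) rfl, rfl⟩
  · rintro ⟨t, ht, rfl⟩
    refine ⟨by simp, rfl, ?_, ?_⟩
    · simp [List.getLast?_cons]
    · rintro x hx rfl; simp_all

-- Consecutive excursions share the endpoint `σ`, so only its first copy is kept.
def glueExcursions (σ : V) (L : List (List V)) : List V :=
  σ :: (L.map List.tail).flatten

theorem glueExcursions_cons (t : List V) (L : List (List V)) :
    glueExcursions σ ((σ :: (t ++ [σ])) :: L) = σ :: (t ++ glueExcursions σ L) := by
  simp [glueExcursions]

theorem isClosedWalk_glueExcursions {L : List (List V)} (hL : ∀ e ∈ L, IsExcursion σ e) :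
    IsClosedWalk σ (glueExcursions σ L) := by
  induction L with
  | nil => exact ⟨List.cons_ne_nil _ _, rfl, rfl⟩
  | cons e L ih =>
    obtain ⟨t, -, rfl⟩ := isExcursion_iff.1 (hL e (by simp))
    obtain ⟨-, -, hlast⟩ := ih fun e he ↦ hL e (by simp [he])
    rw [glueExcursions_cons]
    exact ⟨by simp, rfl, by simpa [List.getLast?_cons, glueExcursions] using hlast⟩

theorem walkWeight_glueExcursions (w : V → V → ℝ≥0∞) {L : List (List V)}
    (hL : ∀ e ∈ L, IsExcursion σ e) :
    walkWeight w (glueExcursions σ L) = (L.map (walkWeight w)).prod := by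
  induction L with
  | nil => rfl
  | cons e L ih =>
    obtain ⟨t, -, rfl⟩ := isExcursion_iff.1 (hL e (by simp))
    rw [glueExcursions_cons, List.map_cons, List.prod_cons, ← ih fun e he ↦ hL e (by simp [he]),
      glueExcursions, ← List.cons_append, walkWeight_append_cons, List.cons_append]

theorem glueExcursions_injOn :
    Set.InjOn (glueExcursions σ) {L | ∀ e ∈ L, IsExcursion σ e} := by
  intro L hL L' hL' h
  induction L generalizing L' with
  | nil =>
    cases L' with
    | nil => rfl
    | cons e' L' =>
      obtain ⟨t', -, rfl⟩ := isExcursion_iff.1 (hL' e' (by simp))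
      simp [glueExcursions] at h
  | cons e L ih =>
    obtain ⟨t, ht, rfl⟩ := isExcursion_iff.1 (hL e (by simp))
    cases L' with
    | nil => simp [glueExcursions] at h
    | cons e' L' =>
      obtain ⟨t', ht', rfl⟩ := isExcursion_iff.1 (hL' e' (by simp))
      simp only [glueExcursions_cons, List.cons.injEq, true_and] at h
      obtain ⟨rfl, hrest⟩ := List.append_cons_inj_of_notMem_left ht ht' h
      rw [ih (fun e he ↦ hL e (by simp [he])) (fun e he ↦ hL' e (by simp [he]))
        (congrArg (List.cons σ) hrest)]

theorem exists_glueExcursions_eq_cons (m : List V) (hm : (σ :: m).getLast? = some σ) :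
    ∃ L, (∀ e ∈ L, IsExcursion σ e) ∧ glueExcursions σ L = σ :: m := by
  classical
  by_cases hσ : σ ∈ m
  · obtain ⟨t, r, ht, rfl, -⟩ := List.exists_erase_eq hσ
    have : r.length < (t ++ σ :: r).length := by simp; omega
    obtain ⟨L, hL, hglue⟩ :=
      exists_glueExcursions_eq_cons r (by simpa [List.getLast?_cons] using hm)
    refine ⟨(σ :: (t ++ [σ])) :: L, ?_, by rw [glueExcursions_cons, hglue]⟩
    intro e he
    rcases List.mem_cons.1 he with rfl | he
    · exact isExcursion_iff.2 ⟨t, ht, rfl⟩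
    · exact hL e he
  · obtain rfl : m = [] := by
      by_contra hne
      rw [List.getLast?_cons_of_ne_nil hne, List.getLast?_eq_some_getLast hne,
        Option.some_inj] at hm
      exact hσ (hm ▸ List.getLast_mem hne)
    exact ⟨[], by simp, rfl⟩
termination_by m.length

theorem IsClosedWalk.exists_glueExcursions_eq {l : List V} (hl : IsClosedWalk σ l) :
    ∃ L, (∀ e ∈ L, IsExcursion σ e) ∧ glueExcursions σ L = l := by
  obtain ⟨-, hhead, hlast⟩ := hl
  obtain ⟨m, rfl⟩ := List.head?_eq_some_iff.1 hhead
  exact exists_glueExcursions_eq_cons m hlast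

variable (σ) in
noncomputable def excursionsEquivClosedWalks :
    List {e : List V // IsExcursion σ e} ≃ {l : List V // IsClosedWalk σ l} :=
  have hval (L : List {e : List V // IsExcursion σ e}) :
      ∀ e ∈ L.map Subtype.val, IsExcursion σ e :=
    List.forall_mem_map.2 fun e _ ↦ e.2
  Equiv.ofBijective
    (fun L ↦ ⟨glueExcursions σ (L.map Subtype.val), isClosedWalk_glueExcursions (hval L)⟩)
    ⟨fun L L' h ↦ List.map_injective_iff.2 Subtype.val_injective <|
        glueExcursions_injOn (hval L) (hval L') (congrArg Subtype.val h),
      fun ⟨l, hl⟩ ↦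
        let ⟨L, hL, hglue⟩ := hl.exists_glueExcursions_eq
        ⟨L.attachWith _ hL, Subtype.ext <| by simpa using hglue⟩⟩

end

/-- **Closed walks factor through excursions.** The total weight of all closed
walks at `σ` equals `∑_{p ∈ ℕ} F^p` where `F` is the total weight of all
excursions from `σ` to `σ`. -/
theorem closed_walks_factor_through_excursions {V : Type*} (σ : V) (w : V → V → ℝ≥0∞) :
    (∑' l : {l : List V // IsClosedWalk σ l}, walkWeight w l.1) =
      ∑' p : ℕ, (∑' l : {l : List V // IsExcursion σ l}, walkWeight w l.1) ^ p := by
  calc ∑' l : {l : List V // IsClosedWalk σ l}, walkWeight w l.1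
      = ∑' L : List {e : List V // IsExcursion σ e},
          walkWeight w (glueExcursions σ (L.map Subtype.val)) :=
        ((excursionsEquivClosedWalks σ).tsum_eq _).symm
    _ = ∑' L : List {e : List V // IsExcursion σ e},
          (L.map fun e ↦ walkWeight w e.1).prod := by
        refine tsum_congr fun L ↦ ?_
        rw [walkWeight_glueExcursions w (List.forall_mem_map.2 fun e _ ↦ e.2), List.map_map]
        rfl
    _ = _ := ENNReal.tsum_list_prod_map _
end

section
/- Two-sided bound for the Type I autocatalytic core (Example 1): Let k_on, k_off, ν be strictly positive reals and A := !![−k_on, k_off + 2ν; k_on, −(k_off + ν)]. Set x := k_on + k_off + ν and λ* := ( −x + Real.sqrt(x² + 4·k_on·ν) ) / 2. Then λ* is an eigenvalue of A, λ* > 0, and 2·(Real.sqrt 2 − 1) · k_on·ν/(k_on + k_off + ν) ≤ λ* ≤ k_on·ν/(k_on + k_off + ν). -/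
/-- **Two-sided bound for the Type I autocatalytic core (Example 1).** With
`A = !![−k_on, k_off + 2ν; k_on, −(k_off + ν)]` and
`λ* = (−x + √(x² + 4 k_on ν))/2`, `x = k_on + k_off + ν`, the number `λ*` is a
positive eigenvalue of `A` and satisfies
`2(√2 − 1)·k_on ν/(k_on + k_off + ν) ≤ λ* ≤ k_on ν/(k_on + k_off + ν)`. -/
theorem typeI_two_sided_bound (kon koff ν : ℝ)
    (hkon : 0 < kon) (hkoff : 0 < koff) (hν : 0 < ν) :
    let A : Matrix (Fin 2) (Fin 2) ℝ := !![-kon, koff + 2 * ν; kon, -(koff + ν)]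
    let x : ℝ := kon + koff + ν
    let lam : ℝ := (-x + Real.sqrt (x ^ 2 + 4 * (kon * ν))) / 2
    (∃ v : Fin 2 → ℝ, v ≠ 0 ∧ A.mulVec v = lam • v) ∧
    0 < lam ∧
    2 * (Real.sqrt 2 - 1) * (kon * ν / (kon + koff + ν)) ≤ lam ∧
    lam ≤ kon * ν / (kon + koff + ν) := by
  intro A x lam
  have hAdef : A = !![-kon, koff + 2 * ν; kon, -(koff + ν)] := rfl
  have hxdef : x = kon + koff + ν := rfl
  have hlamdef : lam = (-x + Real.sqrt (x ^ 2 + 4 * (kon * ν))) / 2 := rfl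
  clear_value A x lam
  subst hAdef
  have hx : 0 < x := by rw [hxdef]; positivity
  set s := Real.sqrt (x ^ 2 + 4 * (kon * ν)) with hs
  have hs0 : 0 ≤ s := Real.sqrt_nonneg _
  have hssq : s ^ 2 = x ^ 2 + 4 * (kon * ν) := Real.sq_sqrt (by positivity)
  have hc : 0 < kon * ν := mul_pos hkon hν
  have hsx : x < s := by nlinarith [sq_nonneg (s - x), sq_nonneg (s + x)]
  have hlam : 0 < lam := by rw [hlamdef]; linarith
  have hquad : lam ^ 2 + x * lam = kon * ν := by
    rw [hlamdef]; nlinarith [hssq]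
  have hsx0 : 0 < s + x := by linarith
  have hlamval : lam = 2 * (kon * ν) / (s + x) := by
    rw [eq_div_iff (by linarith : s + x ≠ 0)]
    nlinarith [hquad, hlamdef, hssq]
  refine ⟨⟨![koff + 2 * ν, lam + kon], ?_, ?_⟩, hlam, ?_, ?_⟩
  · intro h
    have := congrFun h 0
    simp [Matrix.cons_val_zero] at this
    linarith
  · funext i
    fin_cases i
    · simp [Matrix.mulVec, dotProduct, Fin.sum_univ_two,
        Matrix.cons_val_zero, Matrix.cons_val_one]
      ring
    · simp [Matrix.mulVec, dotProduct, Fin.sum_univ_two,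
        Matrix.cons_val_zero, Matrix.cons_val_one]
      linear_combination -hquad + lam * hxdef
  · have h2 : Real.sqrt 2 ^ 2 = 2 := Real.sq_sqrt (by norm_num)
    have h2pos : (1:ℝ) < Real.sqrt 2 := by
      nlinarith [Real.sqrt_nonneg 2]
    have h4 : x ^ 2 + 4 * (kon * ν) ≤ 2 * x ^ 2 := by
      rw [hxdef]
      nlinarith [sq_nonneg (kon - ν),
        mul_pos hkoff (show (0:ℝ) < kon + koff + ν + kon + ν by linarith)]
    have hs2 : s ≤ Real.sqrt 2 * x := by
      calc s ≤ Real.sqrt (2 * x ^ 2) := Real.sqrt_le_sqrt h4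
        _ = Real.sqrt 2 * x := by
            rw [Real.sqrt_mul (by norm_num : (0:ℝ) ≤ 2), Real.sqrt_sq hx.le]
    have key : (Real.sqrt 2 - 1) * (s + x) ≤ x := by
      nlinarith [mul_le_mul_of_nonneg_left hs2
        (by linarith : (0:ℝ) ≤ Real.sqrt 2 - 1), h2, hx]
    have key2 := mul_le_mul_of_nonneg_left key (by positivity : (0:ℝ) ≤ 2 * (kon * ν))
    rw [← hxdef, hlamval,
      show 2 * (Real.sqrt 2 - 1) * (kon * ν / x)
        = (2 * (Real.sqrt 2 - 1) * (kon * ν)) / x from by ring,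
      div_le_div_iff₀ hx hsx0]
    nlinarith [key2]
  · rw [← hxdef, hlamval, div_le_div_iff₀ hsx0 hx]
    nlinarith [hc, hsx]
end

section
/- Unique extension of the Lyapunov eigenvector to a non-irreducible block system: Let V₁, V₂ be finite nonempty index sets and let A be the real matrix indexed by V₁ ⊕ V₂ given in block form by Matrix.fromBlocks A₁ 0 K A₂ (so A has upper-left block A₁, upper-right block 0, lower-left block K, lower-right block A₂). Let λ be a real number such that A₁.mulVec v₁ = λ • v₁ for a given vector v₁ : V₁ → ℝ, and such that every complex eigenvalue of A₂ has real part strictly less than λ. Then λ·1 − A₂ is invertible, and v₂ := (λ·1 − A₂)⁻¹.mulVec (K.mulVec v₁) is the unique vector v₂ : V₂ → ℝ such that A.mulVec (Sum.elim v₁ v₂) = λ • Sum.elim v₁ v₂. -/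
/-!
Since `λ` is not an eigenvalue of `A₂` (its real part is not `< λ`), the matrix `λ·1 − A₂` is
invertible. Given `A₁ v₁ = λ v₁`, the top block of the eigenvalue equation for the block matrix
holds automatically and the bottom block reads `(λ·1 − A₂) v₂ = K v₁`, which has the unique
solution `v₂ = (λ·1 − A₂)⁻¹ K v₁`.
-/

namespace Matrix

variable {m n : Type*} [Fintype n]

theorem IsComplexEigenvalue.of_mulVec_eq_smul {M : Matrix n n ℝ} {v : n → ℝ} {r : ℝ}
    (hv : v ≠ 0) (hMv : M *ᵥ v = r • v) : M.IsComplexEigenvalue r := by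
  refine ⟨Complex.ofReal ∘ v, fun h => hv (funext fun i => ?_), funext fun i => ?_⟩
  · simpa using congrFun h i
  · refine (RingHom.map_mulVec Complex.ofRealHom M v i).symm.trans ?_
    simp [hMv]

theorem isUnit_det_smul_one_sub_of_not_isComplexEigenvalue [DecidableEq n] {M : Matrix n n ℝ}
    {r : ℝ} (hr : ¬ M.IsComplexEigenvalue r) : IsUnit (r • (1 : Matrix n n ℝ) - M).det := by
  rw [isUnit_iff_ne_zero, Ne, ← exists_mulVec_eq_zero_iff]
  rintro ⟨v, hv, hrv⟩
  rw [sub_mulVec, smul_mulVec, one_mulVec, sub_eq_zero] at hrv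
  exact hr (IsComplexEigenvalue.of_mulVec_eq_smul hv hrv.symm)

theorem mulVec_eq_iff_eq_nonsing_inv_mulVec {R : Type*} [CommRing R] [DecidableEq n]
    {M : Matrix n n R} (hM : IsUnit M.det) {x y : n → R} : M *ᵥ x = y ↔ x = M⁻¹ *ᵥ y := by
  constructor
  · rintro rfl
    rw [mulVec_mulVec, nonsing_inv_mul M hM, one_mulVec]
  · rintro rfl
    rw [mulVec_mulVec, mul_nonsing_inv M hM, one_mulVec]

theorem fromBlocks_zero_mulVec_sum_elim_eq_smul_iff {R : Type*} [CommRing R] [Fintype m]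
    [DecidableEq n] {A₁ : Matrix m m R} {A₂ : Matrix n n R} (K : Matrix n m R) {r : R}
    {v₁ : m → R} (h₁ : A₁ *ᵥ v₁ = r • v₁) (v₂ : n → R) :
    fromBlocks A₁ 0 K A₂ *ᵥ Sum.elim v₁ v₂ = r • Sum.elim v₁ v₂ ↔
      (r • (1 : Matrix n n R) - A₂) *ᵥ v₂ = K *ᵥ v₁ := by
  have hsmul : r • Sum.elim v₁ v₂ = Sum.elim (r • v₁) (r • v₂) := Sum.comp_elim _ _ _
  rw [fromBlocks_mulVec, Sum.elim_comp_inl, Sum.elim_comp_inr, zero_mulVec, add_zero, h₁,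
    hsmul, Sum.elim_eq_iff, sub_mulVec, smul_mulVec, one_mulVec, sub_eq_iff_eq_add, add_comm]
  exact (and_iff_right rfl).trans eq_comm

end Matrix

theorem block_lyapunov_extension_general {V₁ V₂ : Type*}
    [Fintype V₁] [Fintype V₂] [DecidableEq V₂]
    (A₁ : Matrix V₁ V₁ ℝ) (A₂ : Matrix V₂ V₂ ℝ) (K : Matrix V₂ V₁ ℝ)
    (lam : ℝ) (v₁ : V₁ → ℝ)
    (h₁ : A₁.mulVec v₁ = lam • v₁)
    (h₂ : ∀ μ : ℂ, A₂.IsComplexEigenvalue μ → μ.re < lam) :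
    IsUnit (lam • (1 : Matrix V₂ V₂ ℝ) - A₂).det ∧
    ∀ v₂ : V₂ → ℝ,
      (Matrix.fromBlocks A₁ 0 K A₂).mulVec (Sum.elim v₁ v₂) = lam • Sum.elim v₁ v₂ ↔
        v₂ = (lam • (1 : Matrix V₂ V₂ ℝ) - A₂)⁻¹.mulVec (K.mulVec v₁) := by
  have hdet : IsUnit (lam • (1 : Matrix V₂ V₂ ℝ) - A₂).det :=
    Matrix.isUnit_det_smul_one_sub_of_not_isComplexEigenvalue fun h => by
      simpa using h₂ lam h
  refine ⟨hdet, fun v₂ => ?_⟩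
  rw [Matrix.fromBlocks_zero_mulVec_sum_elim_eq_smul_iff K h₁,
    Matrix.mulVec_eq_iff_eq_nonsing_inv_mulVec hdet]

/-- **Unique extension of the Lyapunov eigenvector to a non-irreducible block
system.** If `A₁ v₁ = λ v₁` and every complex eigenvalue of `A₂` has real part
strictly less than `λ`, then `λ·1 − A₂` is invertible and
`v₂ = (λ·1 − A₂)⁻¹ K v₁` is the unique vector making `Sum.elim v₁ v₂` an
eigenvector of the block matrix `fromBlocks A₁ 0 K A₂` with eigenvalue `λ`. -/
theorem block_lyapunov_extension {V₁ V₂ : Type*}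
    [Fintype V₁] [Fintype V₂] [DecidableEq V₁] [DecidableEq V₂]
    [Nonempty V₁] [Nonempty V₂]
    (A₁ : Matrix V₁ V₁ ℝ) (A₂ : Matrix V₂ V₂ ℝ) (K : Matrix V₂ V₁ ℝ)
    (lam : ℝ) (v₁ : V₁ → ℝ)
    (h₁ : A₁.mulVec v₁ = lam • v₁)
    (h₂ : ∀ μ : ℂ, A₂.IsComplexEigenvalue μ → μ.re < lam) :
    IsUnit (lam • (1 : Matrix V₂ V₂ ℝ) - A₂).det ∧
    ∀ v₂ : V₂ → ℝ,
      (Matrix.fromBlocks A₁ 0 K A₂).mulVec (Sum.elim v₁ v₂) = lam • Sum.elim v₁ v₂ ↔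
        v₂ = (lam • (1 : Matrix V₂ V₂ ℝ) - A₂)⁻¹.mulVec (K.mulVec v₁) :=
  block_lyapunov_extension_general A₁ A₂ K lam v₁ h₁ h₂
end

section
/- Integral representation of the resolvent: Let n be a positive natural number and B a real n×n matrix such that every complex eigenvalue of B has strictly negative real part. Then B is invertible, the function t ↦ exp(t·B) (matrix exponential) is integrable on [0,∞) entrywise, and ∫₀^∞ exp(t·B) dt = −B⁻¹. -/
open NormedSpace Asymptotics Filter MeasureTheory Set Topology
open scoped Matrix Nat

section ExpDecay

variable (𝕜 E : Type*) [NormedField 𝕜] [NormedAddCommGroup E] [NormedSpace 𝕜 E]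

def expDecaySubmodule : Submodule 𝕜 (ℝ → E) where
  carrier := {f | ∃ c > 0, f =O[atTop] fun t => Real.exp (-c * t)}
  zero_mem' := ⟨1, one_pos, isBigO_zero _ _⟩
  add_mem' := by
    rintro f g ⟨a, ha, hf⟩ ⟨b, hb, hg⟩
    exact ⟨min a b, lt_min ha hb,
      (hf.trans (HurwitzKernelBounds.isBigO_exp_neg_mul_of_le (min_le_left a b))).add
        (hg.trans (HurwitzKernelBounds.isBigO_exp_neg_mul_of_le (min_le_right a b)))⟩
  smul_mem' := by
    rintro r f ⟨c, hc, hf⟩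
    exact ⟨c, hc, hf.const_smul_left r⟩

variable {𝕜 E}

theorem integrableOn_Ioi_of_mem_expDecaySubmodule {f : ℝ → ℝ} (a : ℝ) (hf : Continuous f)
    (hdecay : f ∈ expDecaySubmodule ℝ ℝ) : IntegrableOn f (Ioi a) :=
  let ⟨_, hc, hO⟩ := hdecay
  integrable_of_isBigO_exp_neg hc hf.continuousOn hO

theorem tendsto_zero_of_mem_expDecaySubmodule {f : ℝ → E} (hdecay : f ∈ expDecaySubmodule 𝕜 E) :
    Tendsto f atTop (𝓝 0) := by
  obtain ⟨c, hc, hO⟩ := hdecay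
  refine hO.trans_tendsto (Real.tendsto_exp_atBot.comp ?_)
  exact tendsto_id.const_mul_atTop_of_neg (neg_neg_iff_pos.2 hc)

end ExpDecay

theorem cexp_mul_pow_smul_mem_expDecaySubmodule {E : Type*} [NormedAddCommGroup E]
    [NormedSpace ℂ E] {μ : ℂ} (hμ : μ.re < 0) (j : ℕ) (w : E) :
    (fun t : ℝ => (Complex.exp (t * μ) * t ^ j) • w) ∈ expDecaySubmodule ℂ E := by
  obtain ⟨c, hc, hμc⟩ : ∃ c > 0, μ.re = -2 * c := ⟨-μ.re / 2, by linarith, by ring⟩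
  have hpoly : (fun t : ℝ => Real.exp (t * μ.re) * t ^ j) =O[atTop]
      fun t => Real.exp (t * μ.re) * Real.exp (c * t) :=
    (isBigO_refl _ _).mul (isLittleO_pow_exp_pos_mul_atTop j hc).isBigO
  have hnorm : (fun t : ℝ => Complex.exp (t * μ) * t ^ j) =O[atTop]
      fun t => Real.exp (t * μ.re) * t ^ j :=
    isBigO_of_le _ fun t => by simp [Complex.norm_exp]
  refine ⟨c, hc, (isBigO_of_le' (c := ‖w‖) _ fun t => ?_).trans (hnorm.trans ?_)⟩
  · rw [norm_smul, mul_comm]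
  · refine hpoly.congr_right fun t => ?_
    rw [← Real.exp_add, hμc]
    congr 1
    ring

namespace Matrix

variable {ι : Type*} [Fintype ι] [DecidableEq ι]

theorem exp_smul_mulVec_eq_sum {𝕂 : Type*} [RCLike 𝕂] {N : Matrix ι ι 𝕂} {x : ι → 𝕂} {k : ℕ}
    (hx : (N ^ k) *ᵥ x = 0) (t : ℝ) :
    exp (t • N) *ᵥ x = ∑ j ∈ Finset.range k, (t ^ j / j ! : ℝ) • ((N ^ j) *ᵥ x) := by
  open scoped Norms.Operator in
  have hseries := (exp_series_hasSum_exp' (𝕂 := ℝ) (t • N)).mapL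
    (LinearMap.toContinuousLinearMap ((mulVecBilin ℝ ℝ).flip x))
  simp only [LinearMap.coe_toContinuousLinearMap', LinearMap.flip_apply, mulVecBilin_apply,
    smul_pow, smul_mulVec, smul_smul, ← div_eq_inv_mul] at hseries
  refine hseries.unique (hasSum_sum_of_ne_finset_zero fun j hj => ?_)
  have hkj : k ≤ j := by simpa using hj
  rw [← pow_sub_mul_pow N hkj, ← mulVec_mulVec, hx, mulVec_zero, smul_zero]

theorem exp_smul_one_add (z : ℂ) (A : Matrix ι ι ℂ) :
    exp (z • (1 : Matrix ι ι ℂ) + A) = Complex.exp z • exp A := by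
  rw [exp_add_of_commute _ _ ((Commute.one_left A).smul_left z),
    smul_one_eq_diagonal, exp_diagonal, Pi.exp_def, ← Complex.exp_eq_exp_ℂ,
    ← smul_one_eq_diagonal, smul_mul_assoc, one_mul]

theorem exp_smul_mulVec_mem_expDecaySubmodule_of_mem_maxGenEigenspace
    {C : Matrix ι ι ℂ} {μ : ℂ} (hμ : μ.re < 0) {x : ι → ℂ}
    (hx : x ∈ Module.End.maxGenEigenspace (toLin' C) μ) :
    (fun t : ℝ => exp (t • C) *ᵥ x) ∈ expDecaySubmodule ℂ (ι → ℂ) := by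
  obtain ⟨k, hk⟩ := (Module.End.mem_maxGenEigenspace _ _ _).1 hx
  set N := C - μ • (1 : Matrix ι ι ℂ)
  have hNk : (N ^ k) *ᵥ x = 0 := by
    have hN : toLin' N = toLin' C - μ • 1 := by simp [N, Module.End.one_eq_id]
    rwa [← hN, ← toLin'_pow, toLin'_apply] at hk
  have hexp (t : ℝ) : exp (t • C) *ᵥ x =
      ∑ j ∈ Finset.range k, (Complex.exp (t * μ) * t ^ j) • ((j ! : ℂ)⁻¹ • (N ^ j *ᵥ x)) := by
    have hsplit : t • C = ((t : ℂ) * μ) • (1 : Matrix ι ι ℂ) + t • N := by module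
    rw [hsplit, exp_smul_one_add, smul_mulVec, exp_smul_mulVec_eq_sum hNk, Finset.smul_sum]
    refine Finset.sum_congr rfl fun j _ => ?_
    rw [← Complex.coe_smul, smul_smul, smul_smul]
    congr 1
    push_cast
    ring
  rw [funext hexp, ← Finset.sum_fn]
  exact Submodule.sum_mem _ fun j _ => cexp_mul_pow_smul_mem_expDecaySubmodule hμ j _

theorem exp_smul_mulVec_mem_expDecaySubmodule {C : Matrix ι ι ℂ}
    (hC : ∀ μ, Module.End.HasEigenvalue (toLin' C) μ → μ.re < 0) (v : ι → ℂ) :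
    (fun t : ℝ => exp (t • C) *ᵥ v) ∈ expDecaySubmodule ℂ (ι → ℂ) := by
  let L : (ι → ℂ) →ₗ[ℂ] ℝ → ι → ℂ := LinearMap.pi fun t => (exp (t • C)).mulVecLin
  suffices h : ⊤ ≤ (expDecaySubmodule ℂ (ι → ℂ)).comap L from h Submodule.mem_top
  rw [← Module.End.iSup_maxGenEigenspace_eq_top]
  refine iSup_le fun μ x hx => ?_
  rcases eq_or_ne x 0 with rfl | hx0
  · exact Submodule.zero_mem _
  have hμ : Module.End.HasEigenvalue (toLin' C) μ :=
    Module.End.HasUnifEigenvalue.lt zero_lt_one ((Submodule.ne_bot_iff _).2 ⟨x, hx, hx0⟩)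
  exact exp_smul_mulVec_mem_expDecaySubmodule_of_mem_maxGenEigenspace (hC μ hμ) hx

theorem isComplexEigenvalue_iff_hasEigenvalue {M : Matrix ι ι ℝ} {μ : ℂ} :
    M.IsComplexEigenvalue μ ↔ Module.End.HasEigenvalue (toLin' (M.map Complex.ofReal)) μ := by
  simp [IsComplexEigenvalue, Module.End.hasEigenvalue_iff, Submodule.ne_bot_iff, and_comm]

theorem isUnit_det_of_not_isComplexEigenvalue_zero {M : Matrix ι ι ℝ}
    (h0 : ¬ M.IsComplexEigenvalue 0) : IsUnit M.det := by
  refine isUnit_iff_ne_zero.2 fun hdet => h0 ?_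
  have hdetC : (M.map Complex.ofReal).det = 0 := by
    rw [show M.map Complex.ofReal = Complex.ofRealHom.mapMatrix M from rfl, ← RingHom.map_det,
      hdet, map_zero]
  obtain ⟨v, hv0, hv⟩ := exists_mulVec_eq_zero_iff.2 hdetC
  exact ⟨v, hv0, by rw [hv, zero_smul]⟩

theorem map_ofReal_exp (A : Matrix ι ι ℝ) :
    (exp A).map Complex.ofReal = exp (A.map Complex.ofReal) := by
  open scoped Norms.Operator in
  exact map_exp Complex.ofRealHom.mapMatrix (continuous_id.matrix_map Complex.continuous_ofReal) A

theorem exp_smul_apply_mem_expDecaySubmodule {B : Matrix ι ι ℝ}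
    (hB : ∀ μ : ℂ, B.IsComplexEigenvalue μ → μ.re < 0) (i j : ι) :
    (fun t : ℝ => exp (t • B) i j) ∈ expDecaySubmodule ℝ ℝ := by
  obtain ⟨c, hc, hO⟩ := exp_smul_mulVec_mem_expDecaySubmodule
    (fun μ hμ => hB μ (isComplexEigenvalue_iff_hasEigenvalue.2 hμ)) (Pi.single j 1)
  refine ⟨c, hc, IsBigO.trans (isBigO_of_le _ fun t => ?_) hO⟩
  have hentry : (exp (t • B.map Complex.ofReal) *ᵥ Pi.single j 1) i = exp (t • B) i j := by
    have hsmul : t • B.map Complex.ofReal = (t • B).map Complex.ofReal := by ext; simp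
    rw [mulVec_single_one, hsmul, ← map_ofReal_exp]
    rfl
  calc ‖exp (t • B) i j‖ = ‖(exp (t • B.map Complex.ofReal) *ᵥ Pi.single j 1) i‖ := by
        rw [hentry, Complex.norm_real]
    _ ≤ _ := norm_le_pi_norm _ i

theorem continuous_exp_smul_apply (A : Matrix ι ι ℝ) (i j : ι) :
    Continuous fun t : ℝ => exp (t • A) i j := by
  open scoped Norms.Operator in
  exact (exp_continuous.comp (continuous_id.smul continuous_const)).matrix_elem i j

theorem hasDerivAt_mul_exp_smul_apply (M A : Matrix ι ι ℝ) (i j : ι) (t : ℝ) :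
    HasDerivAt (fun t : ℝ => (M * exp (t • A)) i j) ((M * A * exp (t • A)) i j) t := by
  rw [mul_assoc]
  open scoped Norms.Operator in
  exact (entryLinearMap ℝ ℝ i j).toContinuousLinearMap.hasFDerivAt.comp_hasDerivAt t
    ((hasDerivAt_exp_smul_const' A t).const_mul M)

theorem integral_Ioi_exp_smul_apply {A : Matrix ι ι ℝ} (hA : IsUnit A.det)
    (hdecay : ∀ i j, (fun t : ℝ => exp (t • A) i j) ∈ expDecaySubmodule ℝ ℝ) (i j : ι) :
    ∫ t in Ioi (0 : ℝ), exp (t • A) i j = (-A⁻¹) i j := by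
  have hderiv (t : ℝ) :
      HasDerivAt (fun t : ℝ => (A⁻¹ * exp (t • A)) i j) (exp (t • A) i j) t := by
    simpa [nonsing_inv_mul _ hA] using A⁻¹.hasDerivAt_mul_exp_smul_apply A i j t
  have htendsto : Tendsto (fun t : ℝ => (A⁻¹ * exp (t • A)) i j) atTop (𝓝 0) := by
    simp_rw [mul_apply]
    simpa using tendsto_finsetSum _ fun l _ =>
      (tendsto_zero_of_mem_expDecaySubmodule (hdecay l j)).const_mul (A⁻¹ i l)
  rw [integral_Ioi_of_hasDerivAt_of_tendsto (hderiv 0).continuousAt.continuousWithinAt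
    (fun t _ => hderiv t)
    (integrableOn_Ioi_of_mem_expDecaySubmodule 0 (A.continuous_exp_smul_apply i j) (hdecay i j))
    htendsto]
  simp

end Matrix

theorem resolvent_integral_representation_general (n : ℕ)
    (B : Matrix (Fin n) (Fin n) ℝ)
    (hB : ∀ μ : ℂ, B.IsComplexEigenvalue μ → μ.re < 0) :
    IsUnit B.det ∧
    (∀ i j : Fin n,
      MeasureTheory.IntegrableOn (fun t : ℝ => NormedSpace.exp (t • B) i j) (Set.Ioi 0)) ∧
    ∀ i j : Fin n,
      (∫ t in Set.Ioi (0 : ℝ), NormedSpace.exp (t • B) i j) = (-B⁻¹) i j := by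
  have hdet : IsUnit B.det :=
    Matrix.isUnit_det_of_not_isComplexEigenvalue_zero fun h0 => (hB 0 h0).false
  have hdecay := Matrix.exp_smul_apply_mem_expDecaySubmodule hB
  refine ⟨hdet, fun i j => ?_, Matrix.integral_Ioi_exp_smul_apply hdet hdecay⟩
  exact integrableOn_Ioi_of_mem_expDecaySubmodule 0 (B.continuous_exp_smul_apply i j) (hdecay i j)

/-- **Integral representation of the resolvent.** If every complex eigenvalue
of the real `n×n` matrix `B` (with `n > 0`) has strictly negative real part,
then `B` is invertible, `t ↦ exp(t B)` is entrywise integrable on `(0,∞)`, and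
`∫₀^∞ exp(t B) dt = −B⁻¹` entrywise. -/
theorem resolvent_integral_representation (n : ℕ) (hn : 0 < n)
    (B : Matrix (Fin n) (Fin n) ℝ)
    (hB : ∀ μ : ℂ, B.IsComplexEigenvalue μ → μ.re < 0) :
    IsUnit B.det ∧
    (∀ i j : Fin n,
      MeasureTheory.IntegrableOn (fun t : ℝ => NormedSpace.exp (t • B) i j) (Set.Ioi 0)) ∧
    ∀ i j : Fin n,
      (∫ t in Set.Ioi (0 : ℝ), NormedSpace.exp (t • B) i j) = (-B⁻¹) i j :=
  resolvent_integral_representation_general n B hB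
end
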